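/- For the trapezoid P with vertices (0,0), (α+k,0), (α,1), (0,1), the difference vector 𝔇 between the boundary barycenter (w.r.t. lattice measure) and the interior barycenter (w.r.t. area) equals (k(2α+k-1))/(12·|∂P|·|P|) · (k, -2), where |P| = α + k/2 and |∂P| = 2+2α+k. -/

import Mathlib

open MeasureTheory

/-- The lattice length of the segment from `v` to `w`: the value `|u|` where
`w - v = u • (p, q)` for a primitive (coprime) integer vector `(p, q)`. -/
noncomputable def latticeLength (v w : ℝ × ℝ) : ℝ :=
  sInf {r : ℝ | ∃ (u : ℝ) (p q : ℤ), IsCoprime p q ∧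
    w - v = u • ((p : ℝ), (q : ℝ)) ∧ r = |u|}

/-- Integral of `f` over the segment from `v` to `w` with respect to the lattice
length measure dλ (equal to `latticeLength v w` times normalized length measure). -/
noncomputable def edgeInt (v w : ℝ × ℝ) (f : ℝ × ℝ → ℝ) : ℝ :=
  latticeLength v w * ∫ t in (0:ℝ)..(1:ℝ), f (v + t • (w - v))

/-- The trapezoid with vertices (0,0), (α+k,0), (α,1), (0,1). -/
noncomputable def trap (α k : ℝ) : Set (ℝ × ℝ) :=
  convexHull ℝ ({(0, 0), (α + k, 0), (α, 1), (0, 1)} : Set (ℝ × ℝ))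

noncomputable def trapArea (α k : ℝ) : ℝ := (volume (trap α k)).toReal

noncomputable def trapPerim (α k : ℝ) : ℝ :=
  latticeLength (0, 0) (α + k, 0) + latticeLength (α + k, 0) (α, 1) +
    latticeLength (α, 1) (0, 1) + latticeLength (0, 1) (0, 0)

noncomputable def trapCentroid (α k : ℝ) : ℝ × ℝ :=
  ((∫ p in trap α k, p.1) / trapArea α k, (∫ p in trap α k, p.2) / trapArea α k)

noncomputable def trapBdryInt (α k : ℝ) (f : ℝ × ℝ → ℝ) : ℝ :=
  edgeInt (0, 0) (α + k, 0) f + edgeInt (α + k, 0) (α, 1) f +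
    edgeInt (α, 1) (0, 1) f + edgeInt (0, 1) (0, 0) f

noncomputable def trapBdryBary (α k : ℝ) : ℝ × ℝ :=
  (trapBdryInt α k (fun p => p.1) / trapPerim α k,
   trapBdryInt α k (fun p => p.2) / trapPerim α k)

/-- The vector 𝔇 joining the interior barycenter to the boundary barycenter. -/
noncomputable def trapD (α k : ℝ) : ℝ × ℝ := trapBdryBary α k - trapCentroid α k

/-- The moment-of-inertia matrix Π of the trapezoid about its barycenter. -/
noncomputable def trapPi (α k : ℝ) : Matrix (Fin 2) (Fin 2) ℝ :=
  !![∫ p in trap α k, (p.1 - (trapCentroid α k).1) * (p.1 - (trapCentroid α k).1),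
     ∫ p in trap α k, (p.1 - (trapCentroid α k).1) * (p.2 - (trapCentroid α k).2);
     ∫ p in trap α k, (p.2 - (trapCentroid α k).2) * (p.1 - (trapCentroid α k).1),
     ∫ p in trap α k, (p.2 - (trapCentroid α k).2) * (p.2 - (trapCentroid α k).2)]

open Set

/-!
The trapezoid is the region `0 ≤ y ≤ 1, 0 ≤ x ≤ α + k (1 - y)`, so by Fubini its area and first
moments are integrals of polynomials over `[0, 1]`. On the boundary, a segment whose direction is
`u • (p, q)` with `(p, q)` primitive has lattice length `|u|`: by Bézout the primitive vector is
unique up to sign. The edges therefore have lattice lengths `α + k, 1, α, 1`, and since the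
coordinates are affine along each edge, the boundary moments are sums of lattice length times
edge midpoint.
-/

theorem exists_intCast_mul_of_smul_eq_smul {u u' : ℝ} {p q p' q' : ℤ} (hpq : IsCoprime p q)
    (h : u' • ((p' : ℝ), (q' : ℝ)) = u • ((p : ℝ), (q : ℝ))) : ∃ n : ℤ, u = n * u' := by
  obtain ⟨a, b, hab⟩ := hpq
  have hp : u' * p' = u * p := by simpa using congrArg Prod.fst h
  have hq : u' * q' = u * q := by simpa using congrArg Prod.snd h
  have hab' : (a : ℝ) * p + b * q = 1 := by exact_mod_cast hab
  refine ⟨a * p' + b * q', ?_⟩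
  push_cast
  linear_combination (-u) * hab' - a * hp - b * hq

theorem latticeLength_eq_abs {v w : ℝ × ℝ} {u : ℝ} {p q : ℤ} (hpq : IsCoprime p q)
    (h : w - v = u • ((p : ℝ), (q : ℝ))) : latticeLength v w = |u| := by
  suffices hset : {r : ℝ | ∃ (u : ℝ) (p q : ℤ), IsCoprime p q ∧
      w - v = u • ((p : ℝ), (q : ℝ)) ∧ r = |u|} = {|u|} by
    rw [latticeLength, hset, csInf_singleton]
  ext r
  refine ⟨?_, fun hr => ⟨u, p, q, hpq, h, hr⟩⟩
  rintro ⟨u', p', q', hpq', h', rfl⟩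
  obtain ⟨n, hn⟩ := exists_intCast_mul_of_smul_eq_smul hpq (h' ▸ h)
  obtain ⟨m, hm⟩ := exists_intCast_mul_of_smul_eq_smul hpq' (h ▸ h')
  rcases eq_or_ne u 0 with rfl | hu
  · simp [hm]
  have hnm : n * m = 1 := by
    have : ((n * m : ℤ) : ℝ) * u = 1 * u := by push_cast; linear_combination -hn - n * hm
    exact_mod_cast mul_right_cancel₀ hu this
  rcases Int.eq_one_or_neg_one_of_mul_eq_one hnm with rfl | rfl <;> simp [hn]

theorem trap_latticeLengths (α : ℝ) (k : ℕ) (hα : 0 ≤ α) :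
    latticeLength (0, 0) (α + k, 0) = α + k ∧ latticeLength (α + k, 0) (α, 1) = 1 ∧
      latticeLength (α, 1) (0, 1) = α ∧ latticeLength (0, 1) (0, 0) = 1 := by
  refine ⟨?_, ?_, ?_, ?_⟩
  · rw [latticeLength_eq_abs (u := α + k) (p := 1) (q := 0) isCoprime_one_left (by simp),
      abs_of_nonneg (by positivity)]
  · rw [latticeLength_eq_abs (u := 1) (p := -k) (q := 1) isCoprime_one_right (by simp), abs_one]
  · rw [latticeLength_eq_abs (u := -α) (p := 1) (q := 0) isCoprime_one_left (by simp),
      abs_neg, abs_of_nonneg hα]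
  · rw [latticeLength_eq_abs (u := -1) (p := 0) (q := 1) isCoprime_one_right (by simp),
      abs_neg, abs_one]

theorem integral_unitInterval_quadratic {f : ℝ → ℝ} (c₀ c₁ c₂ : ℝ)
    (hf : ∀ t, f t = c₀ + c₁ * t + c₂ * t ^ 2) :
    ∫ t in (0 : ℝ)..1, f t = c₀ + c₁ / 2 + c₂ / 3 := by
  have hint : ∀ g : ℝ → ℝ, Continuous g → IntervalIntegrable g volume 0 1 :=
    fun g hg => hg.intervalIntegrable 0 1
  simp_rw [hf]
  rw [intervalIntegral.integral_add (hint _ (by fun_prop)) (hint _ (by fun_prop)),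
    intervalIntegral.integral_add (hint _ (by fun_prop)) (hint _ (by fun_prop)),
    intervalIntegral.integral_const_mul, intervalIntegral.integral_const_mul, integral_id,
    integral_pow]
  norm_num
  ring

theorem integral_unitInterval_lineMap (a b : ℝ) :
    ∫ t in (0 : ℝ)..1, (a + t * (b - a)) = (a + b) / 2 := by
  rw [integral_unitInterval_quadratic a (b - a) 0 fun t => by ring]
  ring

theorem edgeInt_fst (v w : ℝ × ℝ) :
    edgeInt v w (fun p => p.1) = latticeLength v w * ((v.1 + w.1) / 2) := by
  simp only [edgeInt, Prod.fst_add, Prod.smul_fst, Prod.fst_sub, smul_eq_mul,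
    integral_unitInterval_lineMap]

theorem edgeInt_snd (v w : ℝ × ℝ) :
    edgeInt v w (fun p => p.2) = latticeLength v w * ((v.2 + w.2) / 2) := by
  simp only [edgeInt, Prod.snd_add, Prod.smul_snd, Prod.snd_sub, smul_eq_mul,
    integral_unitInterval_lineMap]

theorem convexHull_trapezoid {a b : ℝ} (ha : 0 ≤ a) (hb : 0 ≤ b) :
    convexHull ℝ ({(0, 0), (a, 0), (b, 1), (0, 1)} : Set (ℝ × ℝ)) =
      {p | p.2 ∈ Icc 0 1 ∧ p.1 ∈ Icc 0 (a + (b - a) * p.2)} := by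
  refine (convexHull_min ?_ ?_).antisymm ?_
  · simp [insert_subset_iff, ha, hb]
  · rintro p ⟨⟨hp₀, hp₁⟩, hp₂, hp₃⟩ q ⟨⟨hq₀, hq₁⟩, hq₂, hq₃⟩ s t hs ht hst
    simp only [mem_ofPred_eq, mem_Icc, Prod.fst_add, Prod.snd_add, Prod.smul_fst,
      Prod.smul_snd, smul_eq_mul]
    refine ⟨⟨by positivity, by nlinarith⟩, by positivity, by nlinarith⟩
  · rintro ⟨x, y⟩ ⟨⟨hy₀, hy₁⟩, hx₀, hx₁⟩
    set T : Set (ℝ × ℝ) := {(0, 0), (a, 0), (b, 1), (0, 1)}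
    have hconv : Convex ℝ (convexHull ℝ T) := convex_convexHull ℝ T
    have hT : ∀ p ∈ T, p ∈ convexHull ℝ T := fun p hp => subset_convexHull ℝ T hp
    set g := a + (b - a) * y
    have hleft : ((0 : ℝ), y) ∈ convexHull ℝ T := by
      convert hconv (hT (0, 0) (by simp [T])) (hT (0, 1) (by simp [T])) (sub_nonneg.2 hy₁) hy₀
        (by ring) using 1
      ext <;> simp
    have hright : (g, y) ∈ convexHull ℝ T := by
      convert hconv (hT (a, 0) (by simp [T])) (hT (b, 1) (by simp [T])) (sub_nonneg.2 hy₁) hy₀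
        (by ring) using 1
      ext
      · simp only [g, Prod.fst_add, Prod.smul_fst, smul_eq_mul]
        ring
      · simp
    have hg : 0 ≤ g := hx₀.trans hx₁
    convert hconv hleft hright (sub_nonneg.2 (div_le_one_of_le₀ hx₁ hg)) (div_nonneg hx₀ hg)
      (by ring) using 1
    ext
    · simp [div_mul_cancel_of_imp fun hg : g = 0 => le_antisymm (hg ▸ hx₁) hx₀]
    · simp; ring

theorem setIntegral_between_graphs {f g : ℝ → ℝ} {a b : ℝ} (hab : a ≤ b) (hf : Continuous f)
    (hg : Continuous g) (hfg : ∀ y ∈ Icc a b, f y ≤ g y) {F : ℝ × ℝ → ℝ} (hF : Continuous F) :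
    ∫ p in {p : ℝ × ℝ | p.2 ∈ Icc a b ∧ p.1 ∈ Icc (f p.2) (g p.2)}, F p =
      ∫ y in a..b, ∫ x in f y..g y, F (x, y) := by
  set S := {p : ℝ × ℝ | p.2 ∈ Icc a b ∧ p.1 ∈ Icc (f p.2) (g p.2)}
  have hS : IsClosed S :=
    ((isClosed_le continuous_const continuous_snd).inter
      (isClosed_le continuous_snd continuous_const)).inter
    ((isClosed_le (hf.comp continuous_snd) continuous_fst).inter
      (isClosed_le continuous_fst (hg.comp continuous_snd)))
  obtain ⟨m, hm⟩ := (isCompact_Icc (a := a) (b := b)).bddBelow_image hf.continuousOn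
  obtain ⟨M, hM⟩ := (isCompact_Icc (a := a) (b := b)).bddAbove_image hg.continuousOn
  have hSc : IsCompact S := by
    refine (isCompact_Icc (a := (m, a)) (b := (M, b))).of_isClosed_subset hS ?_
    rintro ⟨x, y⟩ ⟨hy, hx⟩
    exact ⟨⟨(hm ⟨y, hy, rfl⟩).trans hx.1, hy.1⟩, ⟨hx.2.trans (hM ⟨y, hy, rfl⟩), hy.2⟩⟩
  have hslice : ∀ y, (∫ x, S.indicator F (x, y)) =
      (Icc a b).indicator (fun y => ∫ x in Icc (f y) (g y), F (x, y)) y := by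
    intro y
    by_cases hy : y ∈ Icc a b
    · rw [indicator_of_mem hy, ← integral_indicator measurableSet_Icc]
      congr 1 with x
      by_cases hx : x ∈ Icc (f y) (g y)
      · rw [indicator_of_mem hx, indicator_of_mem (show (x, y) ∈ S from ⟨hy, hx⟩)]
      · rw [indicator_of_notMem hx, indicator_of_notMem fun h => hx h.2]
    · rw [indicator_of_notMem hy]
      simp [indicator_of_notMem fun h : (_, y) ∈ S => hy h.1]
  have hInt : Integrable (S.indicator F) (volume.prod volume) := by
    rw [← Measure.volume_eq_prod, integrable_indicator_iff hS.measurableSet]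
    exact hF.continuousOn.integrableOn_compact hSc
  rw [← integral_indicator hS.measurableSet, Measure.volume_eq_prod,
    integral_prod_symm _ hInt]
  simp_rw [hslice]
  rw [integral_indicator measurableSet_Icc, intervalIntegral.integral_of_le hab,
    ← integral_Icc_eq_integral_Ioc]
  refine setIntegral_congr_fun measurableSet_Icc fun y hy => ?_
  rw [intervalIntegral.integral_of_le (hfg y hy), integral_Icc_eq_integral_Ioc]

theorem setIntegral_trap {α k : ℝ} (hα : 0 ≤ α) (hk : 0 ≤ k) {F : ℝ × ℝ → ℝ}
    (hF : Continuous F) :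
    ∫ p in trap α k, F p = ∫ y in (0 : ℝ)..1, ∫ x in (0 : ℝ)..(α + k * (1 - y)), F (x, y) := by
  have hslope : ∀ y : ℝ, α + k + (α - (α + k)) * y = α + k * (1 - y) := fun y => by ring
  rw [trap, convexHull_trapezoid (by positivity) hα]
  simp_rw [hslope]
  exact setIntegral_between_graphs (g := fun y => α + k * (1 - y)) zero_le_one
    continuous_const (by fun_prop) (fun y hy => by nlinarith [hy.2]) hF

theorem trapArea_eq {α k : ℝ} (hα : 0 ≤ α) (hk : 0 ≤ k) : trapArea α k = α + k / 2 := by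
  have h := setIntegral_trap hα hk (F := fun _ => (1 : ℝ)) continuous_const
  rw [setIntegral_const, smul_eq_mul, mul_one] at h
  rw [trapArea, ← measureReal_def, h]
  simp only [intervalIntegral.integral_const, smul_eq_mul, mul_one, sub_zero]
  rw [integral_unitInterval_quadratic (α + k) (-k) 0 fun y => by ring]
  ring

theorem integral_fst_trap {α k : ℝ} (hα : 0 ≤ α) (hk : 0 ≤ k) :
    ∫ p in trap α k, p.1 = (α + k) ^ 2 / 2 - k * (α + k) / 2 + k ^ 2 / 6 := by
  rw [setIntegral_trap hα hk continuous_fst]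
  simp only [integral_id]
  rw [integral_unitInterval_quadratic ((α + k) ^ 2 / 2) (-(k * (α + k))) (k ^ 2 / 2)
    fun y => by ring]
  ring

theorem integral_snd_trap {α k : ℝ} (hα : 0 ≤ α) (hk : 0 ≤ k) :
    ∫ p in trap α k, p.2 = (α + k) / 2 - k / 3 := by
  rw [setIntegral_trap hα hk continuous_snd]
  simp only [intervalIntegral.integral_const, smul_eq_mul, sub_zero]
  rw [integral_unitInterval_quadratic 0 (α + k) (-k) fun y => by ring]
  ring

theorem trapPerim_eq {α : ℝ} (k : ℕ) (hα : 0 ≤ α) : trapPerim α k = 2 + 2 * α + k := by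
  obtain ⟨h₁, h₂, h₃, h₄⟩ := trap_latticeLengths α k hα
  rw [trapPerim, h₁, h₂, h₃, h₄]
  ring

theorem trapBdryInt_fst {α : ℝ} (k : ℕ) (hα : 0 ≤ α) :
    trapBdryInt α k (fun p => p.1) = (α + k) ^ 2 / 2 + (α + k / 2) + α ^ 2 / 2 := by
  obtain ⟨h₁, h₂, h₃, h₄⟩ := trap_latticeLengths α k hα
  simp only [trapBdryInt, edgeInt_fst, h₁, h₂, h₃, h₄]
  ring

theorem trapBdryInt_snd {α : ℝ} (k : ℕ) (hα : 0 ≤ α) :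
    trapBdryInt α k (fun p => p.2) = α + 1 := by
  obtain ⟨h₁, h₂, h₃, h₄⟩ := trap_latticeLengths α k hα
  simp only [trapBdryInt, edgeInt_snd, h₁, h₂, h₃, h₄]
  ring

theorem trap_D (α : ℝ) (k : ℕ) (hα : 0 < α) :
    trapD α k =
      (k * (2 * α + k - 1) / (12 * (2 + 2 * α + k) * (α + k / 2))) •
        (((k : ℝ), (-2 : ℝ)) : ℝ × ℝ) := by
  have hk : (0 : ℝ) ≤ k := k.cast_nonneg
  have hperim : (2 + 2 * α + k) ≠ 0 := by positivity
  have harea : (α + k / 2) ≠ 0 := by positivity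
  rw [trapD, trapBdryBary, trapCentroid, trapBdryInt_fst k hα.le, trapBdryInt_snd k hα.le,
    trapPerim_eq k hα.le, trapArea_eq hα.le hk, integral_fst_trap hα.le hk,
    integral_snd_trap hα.le hk]
  ext
  · simp only [Prod.fst_sub, Prod.smul_fst, smul_eq_mul]
    field_simp
    ring
  · simp only [Prod.snd_sub, Prod.smul_snd, smul_eq_mul]
    field_simp
    ring
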